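/- Let (X,F) be a minimal nonautonomous system generated by a commutative family of homeomorphisms of a compact metric space. Then either (X,F) is equicontinuous, or the set of points at which (X,F) is sensitive is dense in X. -/
import Mathlib


open Metric Filter

/-- Forward time maps: `posComp f n = f n ∘ ⋯ ∘ f 1`. -/
def posComp {X : Type*} [TopologicalSpace X] (f : ℕ → X ≃ₜ X) : ℕ → X → X
  | 0 => id
  | n + 1 => (f (n + 1)) ∘ posComp f n

/-- Backward time maps: `negComp f n = f 1⁻¹ ∘ ⋯ ∘ f n⁻¹`. -/
def negComp {X : Type*} [TopologicalSpace X] (f : ℕ → X ≃ₜ X) : ℕ → X → X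
  | 0 => id
  | n + 1 => negComp f n ∘ (f (n + 1)).symm

/-- The time-`n` map `ω_n` of the nonautonomous system generated by `f`. -/
def omegaMap {X : Type*} [TopologicalSpace X] (f : ℕ → X ≃ₜ X) (n : ℤ) : X → X :=
  if 0 ≤ n then posComp f n.toNat else negComp f (-n).toNat

/-- The family is commutative. -/
def Commutes {X : Type*} [TopologicalSpace X] (f : ℕ → X ≃ₜ X) : Prop :=
  ∀ i j, ∀ x : X, f i (f j x) = f j (f i x)

/-- Orbit `O(x) = {ω_n x : n ∈ ℤ}`. -/
def orbit' {X : Type*} [TopologicalSpace X] (f : ℕ → X ≃ₜ X) (x : X) : Set X :=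
  Set.range fun n : ℤ => omegaMap f n x

/-- Orbital hull `O_H(x) = {ω_{k_n} ∘ ⋯ ∘ ω_{k_1} x : k_i ∈ ℤ}`. -/
def orbitalHull {X : Type*} [TopologicalSpace X] (f : ℕ → X ≃ₜ X) (x : X) : Set X :=
  {y | ∃ l : List ℤ, y = l.foldr (fun k z => omegaMap f k z) x}

/-- Truncated orbital hull of order `k`. -/
def truncHull {X : Type*} [TopologicalSpace X] (f : ℕ → X ≃ₜ X) (k : ℕ) (x : X) : Set X :=
  {y | ∃ l : List ℤ, (∀ r ∈ l, |r| ≤ (k : ℤ)) ∧ y = l.foldr (fun j z => omegaMap f j z) x}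

/-- `x` is periodic of period `r`: `ω_{n r} x = x` for all `n ∈ ℤ`. -/
def PeriodicPt {X : Type*} [TopologicalSpace X] (f : ℕ → X ≃ₜ X) (r : ℕ) (x : X) : Prop :=
  ∀ n : ℤ, omegaMap f (n * r) x = x

/-- `Y` is invariant: `ω_k(Y) ⊆ Y` for all `k ∈ ℤ`. -/
def Invariant {X : Type*} [TopologicalSpace X] (f : ℕ → X ≃ₜ X) (Y : Set X) : Prop :=
  ∀ k : ℤ, omegaMap f k '' Y ⊆ Y

/-- The system is minimal: no proper nonempty closed invariant subset. -/
def MinimalSys {X : Type*} [TopologicalSpace X] (f : ℕ → X ≃ₜ X) : Prop :=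
  ∀ Y : Set X, Y.Nonempty → IsClosed Y → Invariant f Y → Y = Set.univ

/-- Equicontinuity of the system. -/
def Equicont {X : Type*} [MetricSpace X] (f : ℕ → X ≃ₜ X) : Prop :=
  ∀ ε > (0 : ℝ), ∃ δ > (0 : ℝ), ∀ a b : X, dist a b < δ →
    ∀ n : ℤ, dist (omegaMap f n a) (omegaMap f n b) < ε

/-- `S ⊆ ℤ` is `M`-syndetic. -/
def MSyndetic (S : Set ℤ) (M : ℤ) : Prop :=
  ∀ a : ℤ, ∃ n ∈ S, a ≤ n ∧ n < a + M

/-- `x` is almost periodic. -/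
def AlmostPeriodicPt {X : Type*} [MetricSpace X] (f : ℕ → X ≃ₜ X) (x : X) : Prop :=
  ∀ ε > (0 : ℝ), ∃ M : ℤ, 0 < M ∧ MSyndetic {n : ℤ | dist (omegaMap f n x) x < ε} M

/-- The system is sensitive at `x`. -/
def SensitiveAt {X : Type*} [MetricSpace X] (f : ℕ → X ≃ₜ X) (x : X) : Prop :=
  ∃ δ > (0 : ℝ), ∀ U : Set X, IsOpen U → x ∈ U → ∃ m : ℤ, δ < diam (omegaMap f m '' U)

/-- Topological transitivity. -/
def TopTransitive {X : Type*} [TopologicalSpace X] (f : ℕ → X ≃ₜ X) : Prop :=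
  ∀ U V : Set X, IsOpen U → IsOpen V → U.Nonempty → V.Nonempty →
    ∃ k : ℤ, ((omegaMap f k '' U) ∩ V).Nonempty

section Aux

variable {X : Type*} [TopologicalSpace X] {f : ℕ → X ≃ₜ X}

lemma continuous_posComp (f : ℕ → X ≃ₜ X) : ∀ n, Continuous (posComp f n)
  | 0 => continuous_id
  | n + 1 => ((f (n + 1)).continuous).comp (continuous_posComp f n)

lemma continuous_negComp (f : ℕ → X ≃ₜ X) : ∀ n, Continuous (negComp f n)
  | 0 => continuous_id
  | n + 1 => (continuous_negComp f n).comp (f (n + 1)).symm.continuous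

lemma continuous_omegaMap (f : ℕ → X ≃ₜ X) (n : ℤ) : Continuous (omegaMap f n) := by
  unfold omegaMap
  split
  · exact continuous_posComp f _
  · exact continuous_negComp f _

lemma negComp_posComp (f : ℕ → X ≃ₜ X) : ∀ n, ∀ x, negComp f n (posComp f n x) = x
  | 0, x => rfl
  | n + 1, x => by
    simp only [posComp, negComp, Function.comp_apply, Homeomorph.symm_apply_apply]
    exact negComp_posComp f n x

lemma posComp_negComp (f : ℕ → X ≃ₜ X) : ∀ n, ∀ x, posComp f n (negComp f n x) = x
  | 0, x => rfl
  | n + 1, x => by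
    simp only [posComp, negComp, Function.comp_apply]
    rw [posComp_negComp f n ((f (n + 1)).symm x), Homeomorph.apply_symm_apply]

lemma omega_neg_omega (f : ℕ → X ≃ₜ X) (k : ℤ) (x : X) :
    omegaMap f (-k) (omegaMap f k x) = x := by
  rcases lt_trichotomy k 0 with h | h | h
  · have h1 : ¬ (0 : ℤ) ≤ k := not_le.2 h
    have h2 : (0 : ℤ) ≤ -k := by omega
    simp only [omegaMap, if_neg h1, if_pos h2]
    exact posComp_negComp f _ x
  · subst h; simp [omegaMap, posComp]
  · have h1 : (0 : ℤ) ≤ k := le_of_lt h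
    have h2 : ¬ (0 : ℤ) ≤ -k := by omega
    simp only [omegaMap, if_pos h1, if_neg h2, neg_neg]
    exact negComp_posComp f _ x

variable (hcomm : Commutes f)
include hcomm

lemma comm_symm (i j : ℕ) (x : X) : f i ((f j).symm x) = (f j).symm (f i x) := by
  apply (f j).injective
  rw [Homeomorph.apply_symm_apply, ← hcomm i j, Homeomorph.apply_symm_apply]

lemma symm_comm_symm (i j : ℕ) (x : X) :
    (f i).symm ((f j).symm x) = (f j).symm ((f i).symm x) := by
  apply (f i).injective
  rw [Homeomorph.apply_symm_apply, comm_symm hcomm, Homeomorph.apply_symm_apply]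

lemma posComp_apply_comm (i : ℕ) : ∀ n, ∀ x, posComp f n (f i x) = f i (posComp f n x)
  | 0, x => rfl
  | n + 1, x => by
    simp only [posComp, Function.comp_apply]
    rw [posComp_apply_comm i n x, hcomm (n + 1) i]

lemma posComp_symm_comm (i : ℕ) :
    ∀ n, ∀ x, posComp f n ((f i).symm x) = (f i).symm (posComp f n x)
  | 0, x => rfl
  | n + 1, x => by
    simp only [posComp, Function.comp_apply]
    rw [posComp_symm_comm i n x, comm_symm hcomm]

lemma negComp_apply_comm (i : ℕ) : ∀ n, ∀ x, negComp f n (f i x) = f i (negComp f n x)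
  | 0, x => rfl
  | n + 1, x => by
    simp only [negComp, Function.comp_apply]
    rw [← comm_symm hcomm i (n + 1), negComp_apply_comm i n]

lemma negComp_symm_comm (i : ℕ) :
    ∀ n, ∀ x, negComp f n ((f i).symm x) = (f i).symm (negComp f n x)
  | 0, x => rfl
  | n + 1, x => by
    simp only [negComp, Function.comp_apply]
    rw [← symm_comm_symm hcomm i (n + 1), negComp_symm_comm i n]

lemma posComp_posComp_comm (m : ℕ) :
    ∀ n, ∀ x, posComp f m (posComp f n x) = posComp f n (posComp f m x)
  | 0, x => rfl
  | n + 1, x => by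
    simp only [posComp, Function.comp_apply]
    rw [posComp_apply_comm hcomm (n + 1) m, posComp_posComp_comm m n x]

lemma posComp_negComp_comm (m : ℕ) :
    ∀ n, ∀ x, posComp f m (negComp f n x) = negComp f n (posComp f m x)
  | 0, x => rfl
  | n + 1, x => by
    simp only [negComp, Function.comp_apply]
    rw [posComp_negComp_comm m n ((f (n + 1)).symm x), posComp_symm_comm hcomm (n + 1) m]

lemma negComp_negComp_comm (m : ℕ) :
    ∀ n, ∀ x, negComp f m (negComp f n x) = negComp f n (negComp f m x)
  | 0, x => rfl
  | n + 1, x => by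
    simp only [negComp, Function.comp_apply]
    rw [negComp_negComp_comm m n ((f (n + 1)).symm x), negComp_symm_comm hcomm (n + 1) m]

lemma omega_comm (m k : ℤ) (x : X) :
    omegaMap f m (omegaMap f k x) = omegaMap f k (omegaMap f m x) := by
  unfold omegaMap
  split <;> split
  · exact posComp_posComp_comm hcomm _ _ x
  · exact posComp_negComp_comm hcomm _ _ x
  · exact (posComp_negComp_comm hcomm _ _ x).symm
  · exact negComp_negComp_comm hcomm _ _ x

lemma foldr_omega_comm (l : List ℤ) (m : ℤ) (x : X) :
    l.foldr (fun k z => omegaMap f k z) (omegaMap f m x)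
      = omegaMap f m (l.foldr (fun k z => omegaMap f k z) x) := by
  induction l with
  | nil => rfl
  | cons k l ih =>
    simp only [List.foldr_cons]
    rw [ih, omega_comm hcomm]

lemma foldr_left_inv (l : List ℤ) (x : X) :
    (l.map Neg.neg).foldr (fun k z => omegaMap f k z)
      (l.foldr (fun k z => omegaMap f k z) x) = x := by
  induction l generalizing x with
  | nil => rfl
  | cons k l ih =>
    simp only [List.map_cons, List.foldr_cons]
    rw [foldr_omega_comm hcomm, ih, omega_neg_omega]

end Aux

section Aux2

variable {X : Type*} [MetricSpace X] [CompactSpace X] {f : ℕ → X ≃ₜ X}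

lemma continuous_foldr (f : ℕ → X ≃ₜ X) (l : List ℤ) :
    Continuous fun x : X => l.foldr (fun k z => omegaMap f k z) x := by
  induction l with
  | nil => exact continuous_id
  | cons k l ih => exact (continuous_omegaMap f k).comp ih

lemma sensitive_foldr (hcomm : Commutes f) {x : X} (hx : SensitiveAt f x) (l : List ℤ) :
    SensitiveAt f (l.foldr (fun k z => omegaMap f k z) x) := by
  obtain ⟨δ, hδ, hsen⟩ := hx
  set g : X → X := fun z => l.foldr (fun k z => omegaMap f k z) z with hg
  set h : X → X := fun z => (l.map Neg.neg).foldr (fun k z => omegaMap f k z) z with hh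
  have hinv : ∀ z, h (g z) = z := fun z => foldr_left_inv hcomm l z
  have hgc : Continuous g := continuous_foldr f l
  have hhc : Continuous h := continuous_foldr f (l.map Neg.neg)
  obtain ⟨δ', hδ', hmod⟩ := Metric.uniformContinuous_iff.mp
    (CompactSpace.uniformContinuous_of_continuous hhc) δ hδ
  refine ⟨δ' / 2, by linarith, ?_⟩
  intro U hUo hyU
  obtain ⟨m, hm⟩ := hsen (g ⁻¹' U) (hUo.preimage hgc) hyU
  -- extract two far points in ω_m '' (g ⁻¹' U)
  have hex : ∃ p ∈ omegaMap f m '' (g ⁻¹' U), ∃ q ∈ omegaMap f m '' (g ⁻¹' U),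
      ¬ dist p q < δ := by
    by_contra hcon
    push_neg at hcon
    have : diam (omegaMap f m '' (g ⁻¹' U)) ≤ δ :=
      diam_le_of_forall_dist_le (le_of_lt hδ) fun p hp q hq => le_of_lt (hcon p hp q hq)
    linarith
  obtain ⟨p, ⟨a, haU, rfl⟩, q, ⟨b, hbU, rfl⟩, hpq⟩ := hex
  refine ⟨m, ?_⟩
  have hA : omegaMap f m (g a) ∈ omegaMap f m '' U := ⟨g a, haU, rfl⟩
  have hB : omegaMap f m (g b) ∈ omegaMap f m '' U := ⟨g b, hbU, rfl⟩
  have hfar : ¬ dist (omegaMap f m (g a)) (omegaMap f m (g b)) < δ' := by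
    intro hlt
    apply hpq
    have e1 : omegaMap f m (g a) = g (omegaMap f m a) := (foldr_omega_comm hcomm l m a).symm
    have e2 : omegaMap f m (g b) = g (omegaMap f m b) := (foldr_omega_comm hcomm l m b).symm
    have := hmod hlt
    rwa [e1, e2, hinv, hinv] at this
  have hle : δ' ≤ dist (omegaMap f m (g a)) (omegaMap f m (g b)) := not_lt.1 hfar
  have hdle : dist (omegaMap f m (g a)) (omegaMap f m (g b)) ≤ diam (omegaMap f m '' U) :=
    dist_le_diam_of_mem (Metric.isBounded_of_compactSpace) hA hB
  linarith

end Aux2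

theorem stmt17 {X : Type*} [MetricSpace X] [CompactSpace X] (f : ℕ → X ≃ₜ X)
    (hcomm : Commutes f) (hmin : MinimalSys f) :
    Equicont f ∨ Dense {x : X | SensitiveAt f x} := by
  by_cases hs : ∃ x, SensitiveAt f x
  · right
    obtain ⟨x0, hx0⟩ := hs
    have hsub : orbitalHull f x0 ⊆ {x : X | SensitiveAt f x} := by
      rintro y ⟨l, rfl⟩
      exact sensitive_foldr hcomm hx0 l
    have hinv : Invariant f (closure (orbitalHull f x0)) := by
      intro k
      have h1 : omegaMap f k '' closure (orbitalHull f x0)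
          ⊆ closure (omegaMap f k '' orbitalHull f x0) :=
        image_closure_subset_closure_image (continuous_omegaMap f k)
      have h2 : omegaMap f k '' orbitalHull f x0 ⊆ orbitalHull f x0 := by
        rintro _ ⟨y, ⟨l, rfl⟩, rfl⟩
        exact ⟨k :: l, rfl⟩
      exact h1.trans (closure_mono h2)
    have hne : (closure (orbitalHull f x0)).Nonempty :=
      ⟨x0, subset_closure ⟨[], rfl⟩⟩
    have hcl := hmin _ hne isClosed_closure hinv
    have hdense : Dense (orbitalHull f x0) := by
      rw [dense_iff_closure_eq]; exact hcl
    exact hdense.mono hsub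
  · left
    push_neg at hs
    intro ε hε
    have key : ∀ x : X, ∃ U : Set X, IsOpen U ∧ x ∈ U ∧
        ∀ m : ℤ, diam (omegaMap f m '' U) ≤ ε / 2 := by
      intro x
      have hx := hs x
      rw [SensitiveAt] at hx
      push_neg at hx
      obtain ⟨U, hUo, hxU, hU⟩ := hx (ε / 2) (by linarith)
      exact ⟨U, hUo, hxU, hU⟩
    choose U hUo hxU hUd using key
    obtain ⟨δ, hδ, hball⟩ := lebesgue_number_lemma_of_metric isCompact_univ hUo
      (fun x _ => Set.mem_iUnion.2 ⟨x, hxU x⟩)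
    refine ⟨δ, hδ, ?_⟩
    intro a b hab n
    obtain ⟨i, hi⟩ := hball a (Set.mem_univ a)
    have haU : a ∈ U i := hi (mem_ball_self hδ)
    have hbU : b ∈ U i := hi (by rwa [mem_ball, dist_comm])
    have h1 : dist (omegaMap f n a) (omegaMap f n b) ≤ diam (omegaMap f n '' U i) :=
      dist_le_diam_of_mem (Metric.isBounded_of_compactSpace)
        (Set.mem_image_of_mem _ haU) (Set.mem_image_of_mem _ hbU)
    have h2 := hUd i n
    linarith
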